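/- arXiv:2010.08156 — 4 statements merged into one kernel-verified Lean document; each statement's English description precedes it below -/
import Mathlib

section
/- Let t be a positive integer and r ≥ t+1 a row index. For every F ∈ SSF(α), the number of free entries t in row r of Φ_{r,t}(F) equals the number of free entries t+1 in row r of F, and the number of free entries t+1 in row r of Φ_{r,t}(F) equals the number of free entries t in row r of F. -/
open Classical MvPolynomial

noncomputable section

namespace Skyline

/-- The box in row `i` and column `j` of the skyline diagram of the composition
`α = (α 1, …, α n)` (rows indexed top to bottom, row `i` has `α i` boxes). -/
def Box (n : ℕ) (α : ℕ → ℕ) (i j : ℕ) : Prop :=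
  1 ≤ i ∧ i ≤ n ∧ 1 ≤ j ∧ j ≤ α i

/-- `F` is a semistandard skyline filling for `α` (with the convention that
`F` takes the value `0` outside of the skyline diagram):
(i) entries weakly decrease from left to right along each row;
(ii) each entry satisfies `F i j ≤ i`;
(iii) the entries in each column are distinct;
(iv) whenever an entry `F i j` lies strictly below an entry `F i' j` in the same
column with `F i j < F i' j`, the box `(i', j+1)` belongs to the diagram and
`F i j < F i' (j+1)`. -/
def IsSSF (n : ℕ) (α : ℕ → ℕ) (F : ℕ → ℕ → ℕ) : Prop :=
  (∀ i j, ¬ Box n α i j → F i j = 0) ∧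
  (∀ i j, Box n α i j → 1 ≤ F i j) ∧
  (∀ i j, 1 ≤ j → Box n α i (j+1) → F i (j+1) ≤ F i j) ∧
  (∀ i j, Box n α i j → F i j ≤ i) ∧
  (∀ i i' j, Box n α i j → Box n α i' j → i ≠ i' → F i j ≠ F i' j) ∧
  (∀ i i' j, Box n α i j → Box n α i' j → i' < i → F i j < F i' j →
      Box n α i' (j+1) ∧ F i j < F i' (j+1))

/-- Column `j` of the filling `F` contains the entry `t`. -/
def ColContains (n : ℕ) (α : ℕ → ℕ) (F : ℕ → ℕ → ℕ) (j t : ℕ) : Prop :=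
  ∃ i, Box n α i j ∧ F i j = t

/-- The unpaired entry `t` in box `(i,j)` and the unpaired entry `t+1` in box
`(i',j')` form a pseudo-free pair: the `t+1` lies strictly above and strictly to
the right of the `t`, and every column strictly between them contains both `t`
and `t+1`. -/
def PseudoFreePair (n : ℕ) (α : ℕ → ℕ) (F : ℕ → ℕ → ℕ) (t i j i' j' : ℕ) : Prop :=
  Box n α i j ∧ F i j = t ∧ ¬ ColContains n α F j (t+1) ∧
  Box n α i' j' ∧ F i' j' = t+1 ∧ ¬ ColContains n α F j' t ∧
  i' < i ∧ j < j' ∧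
  ∀ k, j < k → k < j' → ColContains n α F k t ∧ ColContains n α F k (t+1)

/-- The entry `t` in box `(i,j)` of `F` is free: it is neither paired nor
pseudo-free. -/
def FreeT (n : ℕ) (α : ℕ → ℕ) (F : ℕ → ℕ → ℕ) (t i j : ℕ) : Prop :=
  Box n α i j ∧ F i j = t ∧ ¬ ColContains n α F j (t+1) ∧
  ¬ ∃ i' j', PseudoFreePair n α F t i j i' j'

/-- The entry `t+1` in box `(i,j)` of `F` is free: it is neither paired nor
pseudo-free. -/
def FreeTp1 (n : ℕ) (α : ℕ → ℕ) (F : ℕ → ℕ → ℕ) (t i j : ℕ) : Prop :=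
  Box n α i j ∧ F i j = t+1 ∧ ¬ ColContains n α F j t ∧
  ¬ ∃ i₀ j₀, PseudoFreePair n α F t i₀ j₀ i j

/-- The lowering operator `L_{r,t}`: if row `r` has a free entry `t+1`, replace
the rightmost free `t+1` in row `r` (in column `j`) by `t`, and exchange the
entries `t` and `t+1` in each column `k` of the maximal interval `j' ≤ k < j`
such that `F r k = t+1` and column `k` contains an entry `t` strictly below row
`r`; otherwise do nothing. -/
def Lop (n : ℕ) (α : ℕ → ℕ) (r t : ℕ) (F : ℕ → ℕ → ℕ) : ℕ → ℕ → ℕ :=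
  if {j | FreeTp1 n α F t r j}.Nonempty then
    let j := sSup {j | FreeTp1 n α F t r j}
    let S : Set ℕ := {k | k < j ∧ ∀ m, k ≤ m → m < j →
      F r m = t + 1 ∧ ∃ i, r < i ∧ Box n α i m ∧ F i m = t}
    fun i c =>
      if i = r ∧ c = j then t
      else if c ∈ S ∧ F i c = t then t + 1
      else if c ∈ S ∧ F i c = t + 1 then t
      else F i c
  else F

/-- The raising operator `R_{r,t}`: if row `r` has a free entry `t`, replace
the leftmost free `t` in row `r` (in column `j`) by `t+1`, and exchange the
entries `t` and `t+1` in each column `k` of the maximal interval `j' ≤ k < j`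
such that `F r k = t` and column `k` contains an entry `t+1` strictly below row
`r`; otherwise do nothing. -/
def Rop (n : ℕ) (α : ℕ → ℕ) (r t : ℕ) (F : ℕ → ℕ → ℕ) : ℕ → ℕ → ℕ :=
  if {j | FreeT n α F t r j}.Nonempty then
    let j := sInf {j | FreeT n α F t r j}
    let S : Set ℕ := {k | k < j ∧ ∀ m, k ≤ m → m < j →
      F r m = t ∧ ∃ i, r < i ∧ Box n α i m ∧ F i m = t + 1}
    fun i c =>
      if i = r ∧ c = j then t + 1
      else if c ∈ S ∧ F i c = t then t + 1
      else if c ∈ S ∧ F i c = t + 1 then t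
      else F i c
  else F

/-- The involution `Φ_{r,t}`: with `n₁` the number of free entries `t+1` and
`n₂` the number of free entries `t` in row `r`, apply `L_{r,t}` iterated
`n₁ - n₂` times if `n₁ > n₂`, apply `R_{r,t}` iterated `n₂ - n₁` times if
`n₁ < n₂`, and do nothing if `n₁ = n₂`. -/
def Phi (n : ℕ) (α : ℕ → ℕ) (r t : ℕ) (F : ℕ → ℕ → ℕ) : ℕ → ℕ → ℕ :=
  let n₁ := {j | FreeTp1 n α F t r j}.ncard
  let n₂ := {j | FreeT n α F t r j}.ncard
  if n₂ < n₁ then (Lop n α r t)^[n₁ - n₂] F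
  else if n₁ < n₂ then (Rop n α r t)^[n₂ - n₁] F
  else F

/-- The involution `Φ_r`: apply `Φ_{i,r}` for every row index `i` with
`r + 1 ≤ i ≤ n`. -/
def PhiAll (n : ℕ) (α : ℕ → ℕ) (r : ℕ) (F : ℕ → ℕ → ℕ) : ℕ → ℕ → ℕ :=
  (List.range' (r+1) (n - r)).foldl (fun G i => Phi n α i r G) F

/-- The monomial `x^F = ∏_{(i,j) ∈ D(α)} x_{F(i,j)}` of a filling `F`. -/
def weight (n : ℕ) (α : ℕ → ℕ) (F : ℕ → ℕ → ℕ) : MvPolynomial ℕ ℤ :=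
  ∏ i ∈ Finset.Icc 1 n, ∏ j ∈ Finset.Icc 1 (α i), X (F i j)

/-- The Demazure operator `π_r(f) = ∂_r(x_r f)`, characterized by
`(x_r - x_{r+1}) · π_r(f) = x_r f - x_{r+1} · (s_r f)`. -/
def demazure (r : ℕ) (f : MvPolynomial ℕ ℤ) : MvPolynomial ℕ ℤ :=
  if h : ∃ g, (X r - X (r+1)) * g
      = X r * f - X (r+1) * (rename (Equiv.swap r (r+1)) f)
  then h.choose else 0

/-- The composition obtained from `α` by interchanging `α r` and `α (r+1)`. -/
def swapComp (α : ℕ → ℕ) (r : ℕ) : ℕ → ℕ :=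
  fun i => if i = r then α (r+1) else if i = r+1 then α r else α i

/-- Auxiliary fuelled recursion for the key polynomial: if `α` is not a
partition, apply the Demazure operator `π_i` at the first ascent `i` of `α`
to the key polynomial of the composition with `α i` and `α (i+1)`
interchanged; if `α` is a partition, return `x₁^{α₁} ⋯ xₙ^{αₙ}`. -/
def keyAux (n : ℕ) : ℕ → (ℕ → ℕ) → MvPolynomial ℕ ℤ
  | 0, α => ∏ i ∈ Finset.Icc 1 n, (X i : MvPolynomial ℕ ℤ) ^ (α i)
  | (fuel+1), α =>
    if ∃ i, 1 ≤ i ∧ i < n ∧ α i < α (i+1) then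
      demazure (sInf {i | 1 ≤ i ∧ i < n ∧ α i < α (i+1)})
        (keyAux n fuel (swapComp α (sInf {i | 1 ≤ i ∧ i < n ∧ α i < α (i+1)})))
    else ∏ i ∈ Finset.Icc 1 n, (X i : MvPolynomial ℕ ℤ) ^ (α i)

/-- The key polynomial `κ_α` of the composition `α = (α 1, …, α n)`.
(`n * n` exceeds the number of inversions of `α`, so the fuel never runs out.) -/
def key (n : ℕ) (α : ℕ → ℕ) : MvPolynomial ℕ ℤ :=
  keyAux n (n * n) α

/-- `r` is the first ascent of `α`: `α 1 ≥ α 2 ≥ ⋯ ≥ α r` and `α r < α (r+1)`. -/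
def FirstAscent (n : ℕ) (α : ℕ → ℕ) (r : ℕ) : Prop :=
  1 ≤ r ∧ r + 1 ≤ n ∧ (∀ i, 1 ≤ i → i < r → α (i+1) ≤ α i) ∧ α r < α (r+1)

/-- Move the last `α (r+1) - α r` boxes of row `r` of `F'`, together with their
entries, down to row `r+1` (here `F' ∈ SSF(α')` with `α'` obtained from `α` by
interchanging `α r` and `α (r+1)`). -/
def moveDown (α : ℕ → ℕ) (r : ℕ) (F : ℕ → ℕ → ℕ) : ℕ → ℕ → ℕ :=
  fun i j =>
    if i = r ∧ α r < j then 0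
    else if i = r + 1 ∧ α r < j then F r j
    else F i j

/-- The set `DF(F') = {F₀, F₁, …, F_m}` of derived fillings of `F' ∈ SSF(α')`,
where `m` is the number of free entries `r` in row `r` of `F'`, `F₀` is obtained
from `F'` by moving the last `α (r+1) - α r` boxes of row `r` down to row `r+1`,
and `F_k = R_{r+1,r}^k(F₀)`. -/
def DF (n : ℕ) (α : ℕ → ℕ) (r : ℕ) (F' : ℕ → ℕ → ℕ) : Set (ℕ → ℕ → ℕ) :=
  {F | ∃ k, k ≤ {j | FreeT n (swapComp α r) F' r r j}.ncard ∧
    F = (Rop n α (r+1) r)^[k] (moveDown α r F')}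


/-!
Both `L_{r,t}` and `R_{r,t}` interchange the values `t` and `t+1` inside every column of an
interval `[j', j]` (`colSwap`): column `j` contains only one of the two values, so there the
interchange is the single replacement at `(r, j)`. For a semistandard `F` the result is again
semistandard, and one application of `L_{r,t}` turns the rightmost free `t+1` of row `r` into a
free `t` without changing whether any other entry of row `r` is free (dually for `R_{r,t}`).
Hence `m` applications of `L_{r,t}`, for `m` at most the number of free entries `t+1`, move
exactly `m` free entries from `t+1` to `t`, and `Φ_{r,t}` exchanges the two counts.
-/

variable {n : ℕ} {α : ℕ → ℕ} {t r : ℕ} {F : ℕ → ℕ → ℕ}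

theorem Box.of_le {i c c' : ℕ} (h : Box n α i c) (h1 : 1 ≤ c') (h2 : c' ≤ c) :
    Box n α i c' :=
  ⟨h.1, h.2.1, h1, h2.trans h.2.2.2⟩

theorem finite_setOf_freeT : {c | FreeT n α F t r c}.Finite :=
  (Set.finite_Icc 1 (α r)).subset fun _ hc => ⟨hc.1.2.2.1, hc.1.2.2.2⟩

theorem finite_setOf_freeTp1 : {c | FreeTp1 n α F t r c}.Finite :=
  (Set.finite_Icc 1 (α r)).subset fun _ hc => ⟨hc.1.2.2.1, hc.1.2.2.2⟩

namespace IsSSF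

theorem box_of_ne_zero (hF : IsSSF n α F) {i c : ℕ} (h : F i c ≠ 0) : Box n α i c := by
  by_contra hb
  exact h (hF.1 i c hb)

theorem row_antitone (hF : IsSSF n α F) {i c c' : ℕ} (hb : Box n α i c') (hc : 1 ≤ c)
    (hcc' : c ≤ c') : F i c' ≤ F i c := by
  induction c', hcc' using Nat.le_induction with
  | base => exact le_rfl
  | succ m hm ih =>
    exact (hF.2.2.1 i m (hc.trans hm) hb).trans (ih (hb.of_le (hc.trans hm) m.le_succ))

theorem row_eq_of_entry_eq (hF : IsSSF n α F) {i i' c : ℕ} (h0 : F i c ≠ 0)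
    (he : F i c = F i' c) : i = i' := by
  by_contra hne
  exact hF.2.2.2.2.1 i i' c (hF.box_of_ne_zero h0) (hF.box_of_ne_zero (he ▸ h0)) hne he

theorem le_row_of_entry_eq_succ (hF : IsSSF n α F) {p q k v : ℕ} (hv : v ≠ 0)
    (hp : F p k = v) (hq : F q (k+1) = v) : p ≤ q := by
  by_contra! hqp
  have hbp := hF.box_of_ne_zero (by omega : F p k ≠ 0)
  have hbq := hF.box_of_ne_zero (by omega : F q (k+1) ≠ 0)
  have hge : v ≤ F q k := hq ▸ hF.2.2.1 q k hbp.2.2.1 hbq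
  have hne : F q k ≠ v := fun h => hqp.ne (hF.row_eq_of_entry_eq (by omega) (h.trans hp.symm))
  have := (hF.2.2.2.2.2 p q k hbp (hbq.of_le hbp.2.2.1 k.le_succ) hqp (by omega)).2
  omega

theorem row_le_of_chain (hF : IsSSF n α F) {a b v p q : ℕ} (hv : v ≠ 0) (hab : a ≤ b)
    (hchain : ∀ k, a < k → k < b → ColContains n α F k v) (hp : F p a = v)
    (hq : F q b = v) : p ≤ q := by
  induction b, hab using Nat.le_induction generalizing q with
  | base => exact (hF.row_eq_of_entry_eq (by omega) (hp.trans hq.symm)).le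
  | succ m ham ih =>
    obtain ⟨p', -, hp'⟩ : ColContains n α F m v := by
      rcases ham.eq_or_lt with rfl | h
      · exact ⟨p, hF.box_of_ne_zero (by omega), hp⟩
      · exact hchain m h (by omega)
    exact (ih (fun k hk hk' => hchain k hk (by omega)) hp').trans
      (hF.le_row_of_entry_eq_succ hv hp' hq)

theorem false_of_forall_entry_eq (hF : IsSSF n α F) {i c v : ℕ} (hv : v ≠ 0)
    (h : ∀ m, F i (c + m) = v) : False := by
  have hb := hF.box_of_ne_zero (by rw [h (α i + 1)]; exact hv)
  have := hb.2.2.2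
  omega

end IsSSF

/-! ### Column swaps -/

def colSwap (t : ℕ) (I : Set ℕ) (F : ℕ → ℕ → ℕ) : ℕ → ℕ → ℕ :=
  fun i c => if c ∈ I then Equiv.swap t (t + 1) (F i c) else F i c

section colSwap

variable {I : Set ℕ}

theorem colSwap_of_mem {i c : ℕ} (hc : c ∈ I) :
    colSwap t I F i c = Equiv.swap t (t + 1) (F i c) :=
  if_pos hc

theorem colSwap_of_notMem {i c : ℕ} (hc : c ∉ I) : colSwap t I F i c = F i c :=
  if_neg hc

theorem colContains_colSwap_of_mem {k v : ℕ} (hk : k ∈ I) :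
    ColContains n α (colSwap t I F) k v ↔ ColContains n α F k (Equiv.swap t (t + 1) v) := by
  simp only [ColContains, colSwap_of_mem hk, Equiv.swap_apply_eq_iff]

theorem colContains_colSwap_of_notMem {k v : ℕ} (hk : k ∉ I) :
    ColContains n α (colSwap t I F) k v ↔ ColContains n α F k v := by
  simp only [ColContains, colSwap_of_notMem hk]

theorem colContains_colSwap_both {k : ℕ} :
    (ColContains n α (colSwap t I F) k t ∧ ColContains n α (colSwap t I F) k (t + 1)) ↔
      (ColContains n α F k t ∧ ColContains n α F k (t + 1)) := by
  by_cases hk : k ∈ I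
  · rw [colContains_colSwap_of_mem hk, colContains_colSwap_of_mem hk, Equiv.swap_apply_left,
      Equiv.swap_apply_right, and_comm]
  · rw [colContains_colSwap_of_notMem hk, colContains_colSwap_of_notMem hk]

theorem pseudoFreePair_colSwap {i j i' j' : ℕ} (h : j < j' → j ∉ I ∧ j' ∉ I) :
    PseudoFreePair n α (colSwap t I F) t i j i' j' ↔ PseudoFreePair n α F t i j i' j' := by
  by_cases hjj : j < j'
  · obtain ⟨hj, hj'⟩ := h hjj
    simp only [PseudoFreePair, colSwap_of_notMem hj, colSwap_of_notMem hj',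
      colContains_colSwap_of_notMem hj, colContains_colSwap_of_notMem hj',
      colContains_colSwap_both]
  · simp only [PseudoFreePair, hjj, false_and, and_false]

theorem freeT_colSwap_iff {c : ℕ} (hc : ∀ k, c ≤ k → k ∉ I) :
    FreeT n α (colSwap t I F) t r c ↔ FreeT n α F t r c := by
  have hpair : ∀ i' j', PseudoFreePair n α (colSwap t I F) t r c i' j' ↔
      PseudoFreePair n α F t r c i' j' :=
    fun _ j' => pseudoFreePair_colSwap fun h => ⟨hc c le_rfl, hc j' h.le⟩
  simp only [FreeT, colSwap_of_notMem (hc c le_rfl), colContains_colSwap_of_notMem (hc c le_rfl),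
    hpair]

theorem freeTp1_colSwap_iff {c : ℕ} (hc : ∀ k, k ≤ c → k ∉ I) :
    FreeTp1 n α (colSwap t I F) t r c ↔ FreeTp1 n α F t r c := by
  have hpair : ∀ i₀ j₀, PseudoFreePair n α (colSwap t I F) t i₀ j₀ r c ↔
      PseudoFreePair n α F t i₀ j₀ r c :=
    fun _ j₀ => pseudoFreePair_colSwap fun h => ⟨hc j₀ h.le, hc c le_rfl⟩
  simp only [FreeTp1, colSwap_of_notMem (hc c le_rfl), colContains_colSwap_of_notMem (hc c le_rfl),
    hpair]

theorem isSSF_colSwap (hF : IsSSF n α F) (ht : 1 ≤ t)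
    (hflag : ∀ i c, c ∈ I → F i c = t → t + 1 ≤ i)
    (hrow : ∀ i c, 1 ≤ c → Box n α i (c+1) → colSwap t I F i (c+1) ≤ colSwap t I F i c)
    (htriple : ∀ i i' c, Box n α i c → Box n α i' c → i' < i →
      colSwap t I F i c < colSwap t I F i' c →
      Box n α i' (c+1) ∧ colSwap t I F i c < colSwap t I F i' (c+1)) :
    IsSSF n α (colSwap t I F) := by
  refine ⟨fun i c hb => ?_, fun i c hb => ?_, hrow, fun i c hb => ?_,
    fun i i' c hb hb' hne he => ?_, htriple⟩
  · have := hF.1 i c hb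
    simp only [colSwap, Equiv.swap_apply_def]
    split_ifs <;> omega
  · have := hF.2.1 i c hb
    simp only [colSwap, Equiv.swap_apply_def]
    split_ifs <;> omega
  · have := hF.2.2.2.1 i c hb
    by_cases hc : c ∈ I
    · have := hflag i c hc
      rw [colSwap_of_mem hc, Equiv.swap_apply_def]
      split_ifs <;> omega
    · rwa [colSwap_of_notMem hc]
  · apply hF.2.2.2.2.1 i i' c hb hb' hne
    by_cases hc : c ∈ I
    · rw [colSwap_of_mem hc, colSwap_of_mem hc] at he
      exact (Equiv.swap t (t + 1)).injective he
    · rwa [colSwap_of_notMem hc, colSwap_of_notMem hc] at he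

/- `Equiv.swap t (t+1)` preserves the strict order of every pair except `t < t+1`, so the
conditions of `IsSSF` can only fail for `colSwap` at the configurations excluded below. -/
theorem IsSSF.colSwap_row_antitone (hF : IsSSF n α F)
    (hin : ∀ i c, c ∈ I → c + 1 ∈ I → F i c = t + 1 → F i (c+1) ≠ t)
    (hright : ∀ i c, c ∈ I → c + 1 ∉ I → F i c = t + 1 → F i (c+1) ≠ t + 1)
    (hleft : ∀ i c, c ∉ I → c + 1 ∈ I → F i (c+1) = t → F i c ≠ t) :
    ∀ i c, 1 ≤ c → Box n α i (c+1) → colSwap t I F i (c+1) ≤ colSwap t I F i c := by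
  intro i c hc hb
  have hle := hF.2.2.1 i c hc hb
  by_cases h0 : c ∈ I <;> by_cases h1 : c + 1 ∈ I
  · have := hin i c h0 h1
    rw [colSwap_of_mem h0, colSwap_of_mem h1, Equiv.swap_apply_def, Equiv.swap_apply_def]
    split_ifs <;> omega
  · have := hright i c h0 h1
    rw [colSwap_of_mem h0, colSwap_of_notMem h1, Equiv.swap_apply_def]
    split_ifs <;> omega
  · have := hleft i c h0 h1
    rw [colSwap_of_notMem h0, colSwap_of_mem h1, Equiv.swap_apply_def]
    split_ifs <;> omega
  · rwa [colSwap_of_notMem h0, colSwap_of_notMem h1]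

theorem IsSSF.colSwap_triple (hF : IsSSF n α F) (ht : 1 ≤ t)
    (hin : ∀ i i' c, i' < i → c ∈ I → F i c = t → F i' (c+1) = t + 1 → F i' c = t + 1)
    (hleft : ∀ i i' c, i' < i → c ∉ I → c + 1 ∈ I → F i c = t → F i' (c+1) ≠ t + 1)
    (hpair : ∀ i i' c, i' < i → c ∈ I → F i c = t + 1 → F i' c = t →
      c + 1 ∈ I ∧ F i' (c+1) = t) :
    ∀ i i' c, Box n α i c → Box n α i' c → i' < i →
      colSwap t I F i c < colSwap t I F i' c →
      Box n α i' (c+1) ∧ colSwap t I F i c < colSwap t I F i' (c+1) := by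
  intro i i' c hb hb' hii hlt
  by_cases hsw : c ∈ I ∧ F i c = t + 1 ∧ F i' c = t
  · obtain ⟨hc, ha, hb'⟩ := hsw
    obtain ⟨hc1, hd⟩ := hpair i i' c hii hc ha hb'
    refine ⟨hF.box_of_ne_zero (by omega), ?_⟩
    rw [colSwap_of_mem hc, colSwap_of_mem hc1, ha, hd, Equiv.swap_apply_right,
      Equiv.swap_apply_left]
    omega
  have hab : F i c < F i' c := by
    by_cases hc : c ∈ I
    · have : ¬(F i c = t + 1 ∧ F i' c = t) := fun h => hsw ⟨hc, h⟩
      rw [colSwap_of_mem hc, colSwap_of_mem hc, Equiv.swap_apply_def,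
        Equiv.swap_apply_def] at hlt
      split_ifs at hlt <;> omega
    · rwa [colSwap_of_notMem hc, colSwap_of_notMem hc] at hlt
  obtain ⟨hb1, had⟩ := hF.2.2.2.2.2 i i' c hb hb' hii hab
  refine ⟨hb1, ?_⟩
  by_cases h0 : c ∈ I <;> by_cases h1 : c + 1 ∈ I
  · have := hin i i' c hii h0
    rw [colSwap_of_mem h0, colSwap_of_mem h0] at hlt
    rw [colSwap_of_mem h0, colSwap_of_mem h1]
    simp only [Equiv.swap_apply_def] at hlt ⊢
    split_ifs at hlt ⊢ <;> omega
  · have := hin i i' c hii h0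
    rw [colSwap_of_mem h0, colSwap_of_mem h0] at hlt
    rw [colSwap_of_mem h0, colSwap_of_notMem h1]
    simp only [Equiv.swap_apply_def] at hlt ⊢
    split_ifs at hlt ⊢ <;> omega
  · have := hleft i i' c hii h0 h1
    rw [colSwap_of_notMem h0, colSwap_of_mem h1, Equiv.swap_apply_def]
    split_ifs <;> omega
  · rwa [colSwap_of_notMem h0, colSwap_of_notMem h1]

end colSwap

/-- The columns `j' ≤ k ≤ j` in which `L_{r,t}` (with `x = t+1`, `y = t`) or `R_{r,t}` (with
`x = t`, `y = t+1`) exchange `t` and `t+1`. -/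
def exchangeCols (n : ℕ) (α : ℕ → ℕ) (F : ℕ → ℕ → ℕ) (r j x y : ℕ) : Set ℕ :=
  {k | k ≤ j ∧ ∀ m, k ≤ m → m < j → F r m = x ∧ ∃ i, r < i ∧ Box n α i m ∧ F i m = y}

section exchangeCols

variable {j x y k : ℕ}

theorem right_mem_exchangeCols : j ∈ exchangeCols n α F r j x y :=
  ⟨le_rfl, fun _ hm hmj => absurd hmj (not_lt.2 hm)⟩

theorem mem_exchangeCols_of_le {k' : ℕ} (hk : k ∈ exchangeCols n α F r j x y) (h : k ≤ k')
    (h' : k' ≤ j) : k' ∈ exchangeCols n α F r j x y :=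
  ⟨h', fun m hm hmj => hk.2 m (h.trans hm) hmj⟩

theorem notMem_exchangeCols_of_lt (h : j < k) : k ∉ exchangeCols n α F r j x y :=
  fun hk => absurd hk.1 (not_le.2 h)

theorem succ_mem_exchangeCols (hk : k ∈ exchangeCols n α F r j x y) (hkj : k ≠ j) :
    k + 1 ∈ exchangeCols n α F r j x y :=
  mem_exchangeCols_of_le hk k.le_succ (lt_of_le_of_ne hk.1 hkj)

theorem exchangeCols_maximal (hk : k ∉ exchangeCols n α F r j x y)
    (hk1 : k + 1 ∈ exchangeCols n α F r j x y) :
    ¬(F r k = x ∧ ∃ i, r < i ∧ Box n α i k ∧ F i k = y) := fun hcond =>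
  hk ⟨k.le_succ.trans hk1.1, fun m hm hmj => by
    rcases hm.eq_or_lt with rfl | h
    · exact hcond
    · exact hk1.2 m h hmj⟩

theorem entry_of_mem_exchangeCols (hj : F r j = x) (hk : k ∈ exchangeCols n α F r j x y) :
    F r k = x := by
  rcases hk.1.eq_or_lt with rfl | h
  · exact hj
  · exact (hk.2 k le_rfl h).1

theorem exists_below_of_mem_exchangeCols (hk : k ∈ exchangeCols n α F r j x y) (hkj : k ≠ j) :
    ∃ i, r < i ∧ Box n α i k ∧ F i k = y :=
  (hk.2 k le_rfl (lt_of_le_of_ne hk.1 hkj)).2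

theorem IsSSF.row_eq_of_mem_exchangeCols (hF : IsSSF n α F) (hx : x ≠ 0) (hj : F r j = x)
    (hk : k ∈ exchangeCols n α F r j x y) {i : ℕ} (hi : F i k = x) : i = r :=
  hF.row_eq_of_entry_eq (by omega) (hi.trans (entry_of_mem_exchangeCols hj hk).symm)

theorem IsSSF.lt_row_of_mem_exchangeCols (hF : IsSSF n α F) (hy : y ≠ 0)
    (hjy : ¬ColContains n α F j y) (hk : k ∈ exchangeCols n α F r j x y) {i : ℕ}
    (hi : F i k = y) : r < i := by
  have hkj : k ≠ j := by
    rintro rfl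
    exact hjy ⟨i, hF.box_of_ne_zero (by omega), hi⟩
  obtain ⟨w, hw, -, hwv⟩ := exists_below_of_mem_exchangeCols hk hkj
  rwa [hF.row_eq_of_entry_eq (by omega) (hi.trans hwv.symm)]

/-- The bodies of `Lop` and `Rop`, as column swaps. -/
theorem IsSSF.exchange_eq_colSwap (hF : IsSSF n α F) (ht : 1 ≤ t) {z : ℕ}
    (hxy : x = t ∧ y = t + 1 ∨ x = t + 1 ∧ y = t) (hjx : F r j = x)
    (hjy : ¬ColContains n α F j y) (hz : z = Equiv.swap t (t + 1) x) (i c : ℕ) :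
    (if i = r ∧ c = j then z
      else if c ∈ {k | k < j ∧ ∀ m, k ≤ m → m < j →
          F r m = x ∧ ∃ i, r < i ∧ Box n α i m ∧ F i m = y} ∧ F i c = t then t + 1
      else if c ∈ {k | k < j ∧ ∀ m, k ≤ m → m < j →
          F r m = x ∧ ∃ i, r < i ∧ Box n α i m ∧ F i m = y} ∧ F i c = t + 1 then t
      else F i c) = colSwap t (exchangeCols n α F r j x y) F i c := by
  have hS : c ∈ {k | k < j ∧ ∀ m, k ≤ m → m < j →
      F r m = x ∧ ∃ i, r < i ∧ Box n α i m ∧ F i m = y} ↔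
      c ∈ exchangeCols n α F r j x y ∧ c ≠ j :=
    ⟨fun h => ⟨⟨h.1.le, h.2⟩, h.1.ne⟩, fun h => ⟨lt_of_le_of_ne h.1.1 h.2, h.1.2⟩⟩
  simp only [hS]
  by_cases hcj : c = j
  · subst hcj
    rw [colSwap_of_mem right_mem_exchangeCols]
    by_cases hir : i = r
    · subst hir
      simp [hz, hjx]
    · have h1 : F i c ≠ x := fun h =>
        hir (hF.row_eq_of_entry_eq (by omega) (h.trans hjx.symm))
      have h2 : F i c ≠ y := fun h => hjy ⟨i, hF.box_of_ne_zero (by omega), h⟩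
      simp only [hir, false_and, if_false, ne_eq, not_true_eq_false, and_false,
        Equiv.swap_apply_def]
      split_ifs <;> omega
  · by_cases hc : c ∈ exchangeCols n α F r j x y
    · simp only [hcj, and_false, if_false, hc, ne_eq, not_false_eq_true, true_and,
        colSwap_of_mem hc, Equiv.swap_apply_def]
    · simp [hcj, hc, colSwap_of_notMem hc]

end exchangeCols

/-! ### The lowering operator -/

/-- The column `j` of `L_{r,t}`. -/
def lowerCol (n : ℕ) (α : ℕ → ℕ) (t r : ℕ) (F : ℕ → ℕ → ℕ) : ℕ :=
  sSup {j | FreeTp1 n α F t r j}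

abbrev lowerCols (n : ℕ) (α : ℕ → ℕ) (t r : ℕ) (F : ℕ → ℕ → ℕ) : Set ℕ :=
  exchangeCols n α F r (lowerCol n α t r F) (t + 1) t

theorem freeTp1_lowerCol (hNE : {j | FreeTp1 n α F t r j}.Nonempty) :
    FreeTp1 n α F t r (lowerCol n α t r F) :=
  Nat.sSup_mem hNE finite_setOf_freeTp1.bddAbove

theorem le_lowerCol {c : ℕ} (hc : FreeTp1 n α F t r c) : c ≤ lowerCol n α t r F :=
  le_csSup finite_setOf_freeTp1.bddAbove hc

theorem lop_eq_colSwap (hF : IsSSF n α F) (ht : 1 ≤ t)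
    (hNE : {j | FreeTp1 n α F t r j}.Nonempty) :
    Lop n α r t F = colSwap t (lowerCols n α t r F) F := by
  obtain ⟨-, hjx, hjy, -⟩ := freeTp1_lowerCol hNE
  funext i c
  rw [Lop, if_pos hNE]
  exact hF.exchange_eq_colSwap ht (Or.inr ⟨rfl, rfl⟩) hjx hjy
    (Equiv.swap_apply_right _ _).symm i c

theorem IsSSF.entry_ne_above_run (hF : IsSSF n α F) (ht : t ≠ 0) {a c i : ℕ} (hi : i < r)
    (hac : a ≤ c) (ha : ¬ColContains n α F a t) (hrun : ∀ m, a ≤ m → m < c → F r m = t + 1) :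
    F i c ≠ t := by
  induction c, hac using Nat.le_induction with
  | base => exact fun h => ha ⟨i, hF.box_of_ne_zero (by omega), h⟩
  | succ m ham ih =>
    intro h
    have hrm := hrun m ham m.lt_succ_self
    have hb := hF.box_of_ne_zero (by omega : F i (m+1) ≠ 0)
    have hbr := hF.box_of_ne_zero (by omega : F r m ≠ 0)
    have hbm : Box n α i m := hb.of_le hbr.2.2.1 m.le_succ
    have hge : t ≤ F i m := h ▸ hF.2.2.1 i m hbr.2.2.1 hb
    have hne1 : F i m ≠ t + 1 := fun h' =>
      hi.ne (hF.row_eq_of_entry_eq (by omega) (h'.trans hrm.symm))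
    have hne := ih fun m' h1 h2 => hrun m' h1 (by omega)
    have := (hF.2.2.2.2.2 r i m hbr hbm hi (by omega)).2
    omega

theorem IsSSF.succ_entry_of_lowerCol_lt (hF : IsSSF n α F) (ht : 1 ≤ t)
    (hNE : {j | FreeTp1 n α F t r j}.Nonempty) {c : ℕ}
    (hc : lowerCol n α t r F < c) (hv : F r c = t + 1) : F r (c + 1) = t + 1 := by
  obtain ⟨hjb, hjv, hjt, -⟩ := freeTp1_lowerCol hNE
  set J := lowerCol n α t r F
  have hb := hF.box_of_ne_zero (by omega : F r c ≠ 0)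
  have hrun : ∀ m, J ≤ m → m ≤ c → F r m = t + 1 := fun m h1 h2 => by
    have hbm : Box n α r m := hb.of_le (hjb.2.2.1.trans h1) h2
    have := hF.row_antitone hbm hjb.2.2.1 h1
    have := hF.row_antitone hb (hjb.2.2.1.trans h1) h2
    omega
  by_cases hcol : ColContains n α F c t
  · obtain ⟨i, hbi, hi⟩ := hcol
    rcases lt_trichotomy i r with hir | rfl | hir
    · exact absurd hi (hF.entry_ne_above_run (by omega) hir hc.le hjt
        fun m h1 h2 => hrun m h1 h2.le)
    · omega
    · have h5 := hF.2.2.2.2.2 i r c hbi hb hir (by omega)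
      have := hF.2.2.1 r c hb.2.2.1 h5.1
      omega
  · have hfree : FreeTp1 n α F t r c := by
      refine ⟨hb, hv, hcol, ?_⟩
      rintro ⟨i₀, j₀, hb₀, hv₀, hcol₀, -, -, -, -, hj₀c, hmid⟩
      rcases lt_trichotomy j₀ J with h | rfl | h
      · exact hjt (hmid J h hc).1
      · exact hjt ⟨i₀, hb₀, hv₀⟩
      · exact hcol₀ ⟨r, hb.of_le hb₀.2.2.1 hj₀c.le, hrun j₀ h.le hj₀c.le⟩
    exact absurd (le_lowerCol hfree) (not_le.2 hc)

theorem IsSSF.entry_ne_succ_of_lowerCol_lt (hF : IsSSF n α F) (ht : 1 ≤ t)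
    (hNE : {j | FreeTp1 n α F t r j}.Nonempty) {c : ℕ}
    (hc : lowerCol n α t r F < c) : F r c ≠ t + 1 := by
  intro hv
  have hrun : ∀ m, F r (c + m) = t + 1 := by
    intro m
    induction m with
    | zero => exact hv
    | succ m ih => exact hF.succ_entry_of_lowerCol_lt ht hNE (c := c + m) (by omega) ih
  exact hF.false_of_forall_entry_eq (by omega) hrun

theorem IsSSF.entry_ne_left_of_lowerCols (hF : IsSSF n α F) (ht : 1 ≤ t)
    (hNE : {j | FreeTp1 n α F t r j}.Nonempty) {c i : ℕ}
    (hc : c ∉ lowerCols n α t r F)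
    (hc1 : c + 1 ∈ lowerCols n α t r F) (hi : r < i) :
    F i c ≠ t := by
  intro hv
  obtain ⟨hjb, hjv, hjt, hjfree⟩ := freeTp1_lowerCol hNE
  have hr1 : F r (c+1) = t + 1 := entry_of_mem_exchangeCols hjv hc1
  have hbi := hF.box_of_ne_zero (by omega : F i c ≠ 0)
  have hbr1 := hF.box_of_ne_zero (by omega : F r (c+1) ≠ 0)
  have hrc : t + 1 < F r c := by
    have := hF.2.2.1 r c hbi.2.2.1 hbr1
    have : F r c ≠ t + 1 := fun h => exchangeCols_maximal hc hc1 ⟨h, i, hi, hbi, hv⟩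
    omega
  by_cases hcol : ColContains n α F c (t + 1)
  · obtain ⟨q, hbq, hq⟩ := hcol
    rcases lt_or_gt_of_ne (show q ≠ r by rintro rfl; omega) with hqr | hqr
    · have h5 := hF.2.2.2.2.2 i q c hbi hbq (by omega) (by omega)
      have := hF.2.2.1 q c hbi.2.2.1 h5.1
      have hq1 : F q (c+1) = t + 1 := by omega
      exact hqr.ne (hF.row_eq_of_entry_eq (by omega) (hq1.trans hr1.symm))
    · have := hF.le_row_of_entry_eq_succ (by omega : t + 1 ≠ 0) hq hr1
      omega
  · apply hjfree
    refine ⟨i, c, hbi, hv, hcol, hjb, hjv, hjt, hi, hc1.1, fun k hk1 hk2 => ?_⟩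
    have hk := mem_exchangeCols_of_le hc1 hk1 hk2.le
    obtain ⟨w, -, hbw, hw⟩ := exists_below_of_mem_exchangeCols hk hk2.ne
    have hrk := entry_of_mem_exchangeCols hjv hk
    exact ⟨⟨w, hbw, hw⟩, ⟨r, hF.box_of_ne_zero (by omega), hrk⟩⟩

theorem IsSSF.lop (hF : IsSSF n α F) (ht : 1 ≤ t) (hrt : t + 1 ≤ r)
    (hNE : {j | FreeTp1 n α F t r j}.Nonempty) :
    IsSSF n α (Lop n α r t F) := by
  obtain ⟨-, hjv, hjt, -⟩ := freeTp1_lowerCol hNE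
  set J := lowerCol n α t r F
  have hx : ∀ {i k}, k ∈ lowerCols n α t r F → F i k = t + 1 → i = r :=
    fun hk => hF.row_eq_of_mem_exchangeCols (by omega) hjv hk
  have hy : ∀ {i k}, k ∈ lowerCols n α t r F → F i k = t → r < i :=
    fun hk => hF.lt_row_of_mem_exchangeCols (by omega) hjt hk
  rw [lop_eq_colSwap hF ht hNE]
  refine isSSF_colSwap hF ht (fun i c hc h => by have := hy hc h; omega)
    (hF.colSwap_row_antitone ?_ ?_ ?_) (hF.colSwap_triple ht ?_ ?_ ?_)
  · intro i c hc hc1 h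
    rw [hx hc h, entry_of_mem_exchangeCols hjv hc1]
    omega
  · intro i c hc hc1 h
    have hcJ : c = J := by
      by_contra h'
      exact hc1 (succ_mem_exchangeCols hc h')
    rw [hx hc h, hcJ]
    exact hF.entry_ne_succ_of_lowerCol_lt ht hNE (by omega)
  · intro i c hc hc1 h
    exact hF.entry_ne_left_of_lowerCols ht hNE hc hc1 (hy hc1 h)
  · intro i i' c _ hc h h'
    have hcJ : c ≠ J := by
      rintro rfl
      exact hjt ⟨i, hF.box_of_ne_zero (by omega), h⟩
    rw [hx (succ_mem_exchangeCols hc hcJ) h']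
    exact entry_of_mem_exchangeCols hjv hc
  · intro i i' c hii hc hc1 h h'
    exact hF.entry_ne_left_of_lowerCols ht hNE hc hc1 (by rw [← hx hc1 h']; exact hii) h
  · intro i i' c hii hc h h'
    have := hx hc h
    have := hy hc h'
    omega

theorem IsSSF.freeT_lop_lowerCol (hF : IsSSF n α F) (ht : 1 ≤ t)
    (hNE : {j | FreeTp1 n α F t r j}.Nonempty) :
    FreeT n α (Lop n α r t F) t r (lowerCol n α t r F) := by
  obtain ⟨hjb, hjv, hjt, -⟩ := freeTp1_lowerCol hNE
  have hJ : lowerCol n α t r F ∈ lowerCols n α t r F := right_mem_exchangeCols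
  rw [lop_eq_colSwap hF ht hNE]
  refine ⟨hjb, by rw [colSwap_of_mem hJ, hjv, Equiv.swap_apply_right],
    by rwa [colContains_colSwap_of_mem hJ, Equiv.swap_apply_right], ?_⟩
  rintro ⟨i', j', -, -, -, -, hv', -, hi', hJj', hmid⟩
  rw [colSwap_of_notMem (notMem_exchangeCols_of_lt hJj')] at hv'
  have := hF.row_le_of_chain (by omega) hJj'.le
    (fun k h1 h2 => (colContains_colSwap_both.1 (hmid k h1 h2)).2) hjv hv'
  omega

theorem IsSSF.setOf_freeTp1_lop (hF : IsSSF n α F) (ht : 1 ≤ t)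
    (hNE : {j | FreeTp1 n α F t r j}.Nonempty) :
    {c | FreeTp1 n α (Lop n α r t F) t r c} =
      {c | FreeTp1 n α F t r c} \ {lowerCol n α t r F} := by
  obtain ⟨-, hjv, -, -⟩ := freeTp1_lowerCol hNE
  set J := lowerCol n α t r F
  rw [lop_eq_colSwap hF ht hNE]
  ext c
  simp only [Set.mem_ofPred_eq, Set.mem_sdiff, Set.mem_singleton_iff]
  by_cases hc : c ∈ lowerCols n α t r F
  · refine iff_of_false (fun h => ?_) (fun ⟨h, hcJ⟩ => ?_)
    · have := h.2.1
      rw [colSwap_of_mem hc, entry_of_mem_exchangeCols hjv hc, Equiv.swap_apply_right] at this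
      omega
    · obtain ⟨w, -, hbw, hw⟩ := exists_below_of_mem_exchangeCols hc hcJ
      exact h.2.2.1 ⟨w, hbw, hw⟩
  · have hcJ : c ≠ J := fun h => hc (h ▸ right_mem_exchangeCols)
    rcases lt_or_gt_of_ne hcJ with hlt | hgt
    · rw [freeTp1_colSwap_iff fun k hk hkI => hc (mem_exchangeCols_of_le hkI hk hlt.le)]
      exact (and_iff_left hcJ).symm
    · refine iff_of_false (fun h => ?_) (fun h => ?_)
      · have := h.2.1
        rw [colSwap_of_notMem hc] at this
        exact hF.entry_ne_succ_of_lowerCol_lt ht hNE hgt this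
      · exact hF.entry_ne_succ_of_lowerCol_lt ht hNE hgt h.1.2.1

theorem IsSSF.setOf_freeT_lop (hF : IsSSF n α F) (ht : 1 ≤ t)
    (hNE : {j | FreeTp1 n α F t r j}.Nonempty) :
    {c | FreeT n α (Lop n α r t F) t r c} =
      insert (lowerCol n α t r F) {c | FreeT n α F t r c} := by
  obtain ⟨hjb, hjv, -, -⟩ := freeTp1_lowerCol hNE
  have hJfree := hF.freeT_lop_lowerCol ht hNE
  set J := lowerCol n α t r F
  rw [lop_eq_colSwap hF ht hNE] at hJfree ⊢
  ext c
  simp only [Set.mem_ofPred_eq, Set.mem_insert_iff]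
  by_cases hcJ : c = J
  · subst hcJ
    exact iff_of_true hJfree (Or.inl rfl)
  by_cases hc : c ∈ lowerCols n α t r F
  · refine iff_of_false (fun h => ?_) ?_
    · obtain ⟨w, -, hbw, hw⟩ := exists_below_of_mem_exchangeCols hc hcJ
      exact h.2.2.1 ((colContains_colSwap_of_mem hc).2
        (by rw [Equiv.swap_apply_right]; exact ⟨w, hbw, hw⟩))
    · rintro (h | h)
      · exact hcJ h
      · have := h.2.1
        rw [entry_of_mem_exchangeCols hjv hc] at this
        omega
  · rcases lt_or_gt_of_ne hcJ with hlt | hgt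
    · refine iff_of_false (fun h => ?_) ?_
      · have hv := h.2.1
        rw [colSwap_of_notMem hc] at hv
        have := hF.row_antitone hjb h.1.2.2.1 hlt.le
        omega
      · rintro (h | h)
        · exact hcJ h
        · have := h.2.1
          have := hF.row_antitone hjb h.1.2.2.1 hlt.le
          omega
    · rw [freeT_colSwap_iff fun k hk => notMem_exchangeCols_of_lt (hgt.trans_le hk)]
      exact ⟨Or.inr, fun h => h.resolve_left hcJ⟩

/-! ### The raising operator -/

/-- The column `j` of `R_{r,t}`. -/
def raiseCol (n : ℕ) (α : ℕ → ℕ) (t r : ℕ) (F : ℕ → ℕ → ℕ) : ℕ :=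
  sInf {j | FreeT n α F t r j}

abbrev raiseCols (n : ℕ) (α : ℕ → ℕ) (t r : ℕ) (F : ℕ → ℕ → ℕ) : Set ℕ :=
  exchangeCols n α F r (raiseCol n α t r F) t (t + 1)

theorem freeT_raiseCol (hNE : {j | FreeT n α F t r j}.Nonempty) :
    FreeT n α F t r (raiseCol n α t r F) :=
  Nat.sInf_mem hNE

theorem raiseCol_le {c : ℕ} (hc : FreeT n α F t r c) : raiseCol n α t r F ≤ c :=
  Nat.sInf_le hc

theorem rop_eq_colSwap (hF : IsSSF n α F) (ht : 1 ≤ t)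
    (hNE : {j | FreeT n α F t r j}.Nonempty) :
    Rop n α r t F = colSwap t (raiseCols n α t r F) F := by
  obtain ⟨-, hjx, hjy, -⟩ := freeT_raiseCol hNE
  funext i c
  rw [Rop, if_pos hNE]
  exact hF.exchange_eq_colSwap ht (Or.inl ⟨rfl, rfl⟩) hjx hjy
    (Equiv.swap_apply_left _ _).symm i c

theorem IsSSF.entry_ne_of_succ_mem_raiseCols (hF : IsSSF n α F) (ht : 1 ≤ t)
    (hNE : {j | FreeT n α F t r j}.Nonempty) {c i : ℕ}
    (hc1 : c + 1 ∈ raiseCols n α t r F) (hi : r < i) :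
    F i c ≠ t := by
  intro hv
  obtain ⟨-, hjv, -, -⟩ := freeT_raiseCol hNE
  have hr1 : F r (c+1) = t := entry_of_mem_exchangeCols hjv hc1
  have hbi := hF.box_of_ne_zero (by omega : F i c ≠ 0)
  have hbr1 := hF.box_of_ne_zero (by omega : F r (c+1) ≠ 0)
  have hbr : Box n α r c := hbr1.of_le hbi.2.2.1 c.le_succ
  have hge := hF.2.2.1 r c hbi.2.2.1 hbr1
  have hne : F r c ≠ t := fun h => hi.ne' (hF.row_eq_of_entry_eq (by omega) (hv.trans h.symm))
  have := (hF.2.2.2.2.2 i r c hbi hbr hi (by omega)).2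
  omega

theorem IsSSF.entry_ne_left_of_raiseCols (hF : IsSSF n α F) (ht : 1 ≤ t)
    (hNE : {j | FreeT n α F t r j}.Nonempty) {c : ℕ}
    (hc : c ∉ raiseCols n α t r F)
    (hc1 : c + 1 ∈ raiseCols n α t r F) : F r c ≠ t := by
  intro hv
  obtain ⟨-, hjv, hjt1, -⟩ := freeT_raiseCol hNE
  set J := raiseCol n α t r F
  have hbr := hF.box_of_ne_zero (by omega : F r c ≠ 0)
  have hcol : ¬ColContains n α F c (t + 1) := by
    rintro ⟨q, hbq, hq⟩
    rcases lt_trichotomy q r with hqr | rfl | hqr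
    · have h5 := hF.2.2.2.2.2 r q c hbr hbq hqr (by omega)
      have := hF.2.2.1 q c hbr.2.2.1 h5.1
      have := hF.lt_row_of_mem_exchangeCols (by omega) hjt1 hc1 (by omega : F q (c+1) = t + 1)
      omega
    · omega
    · exact exchangeCols_maximal hc hc1 ⟨hv, q, hqr, hbq, hq⟩
  have hfree : FreeT n α F t r c := by
    refine ⟨hbr, hv, hcol, ?_⟩
    rintro ⟨i', j', -, -, -, -, -, hj't, -, hcj', hmid⟩
    by_cases hj' : j' ∈ raiseCols n α t r F
    · have hrj' := entry_of_mem_exchangeCols hjv hj'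
      exact hj't ⟨r, hF.box_of_ne_zero (by omega), hrj'⟩
    · have hJj' : J < j' := by
        by_contra h
        exact hj' (mem_exchangeCols_of_le hc1 hcj' (by omega))
      exact hjt1 (hmid J (by have := hc1.1; omega) hJj').2
  have := raiseCol_le hfree
  have := hc1.1
  omega

theorem IsSSF.colContains_and_succ_entry_of_above_raiseCol (hF : IsSSF n α F) (ht : 1 ≤ t)
    (hNE : {j | FreeT n α F t r j}.Nonempty) {i m : ℕ} (hi : i < r)
    (hv : F i (raiseCol n α t r F + m) = t + 1)
    (hmid : ∀ k, raiseCol n α t r F < k → k < raiseCol n α t r F + m →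
      ColContains n α F k t ∧ ColContains n α F k (t + 1)) (hm : 1 ≤ m) :
    ColContains n α F (raiseCol n α t r F + m) t ∧
      F i (raiseCol n α t r F + m + 1) = t + 1 := by
  obtain ⟨hjb, hjv, hjt1, hjfree⟩ := freeT_raiseCol hNE
  set J := raiseCol n α t r F
  have hbi := hF.box_of_ne_zero (by omega : F i (J + m) ≠ 0)
  by_cases hcol : ColContains n α F (J + m) t
  · refine ⟨hcol, ?_⟩
    obtain ⟨q, hbq, hq⟩ := hcol
    have := hF.row_le_of_chain (by omega) (by omega : J ≤ J + m)
      (fun k h1 h2 => (hmid k h1 h2).1) hjv hq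
    have h5 := hF.2.2.2.2.2 q i _ hbq hbi (by omega) (by omega)
    have := hF.2.2.1 i _ hbi.2.2.1 h5.1
    omega
  · exact absurd ⟨i, J + m, hjb, hjv, hjt1, hbi, hv, hcol, hi, by omega, hmid⟩ hjfree

theorem IsSSF.entry_ne_succ_above_raiseCol (hF : IsSSF n α F) (ht : 1 ≤ t)
    (hNE : {j | FreeT n α F t r j}.Nonempty) {i : ℕ} (hi : i < r) :
    F i (raiseCol n α t r F + 1) ≠ t + 1 := by
  intro hv
  set J := raiseCol n α t r F
  have hrun : ∀ m, 1 ≤ m → F i (J + m) = t + 1 ∧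
      ∀ k, J < k → k < J + m → ColContains n α F k t ∧ ColContains n α F k (t + 1) := by
    intro m hm
    induction m, hm using Nat.le_induction with
    | base => exact ⟨hv, fun k h1 h2 => by omega⟩
    | succ m hm ih =>
      obtain ⟨hcol, hnext⟩ := hF.colContains_and_succ_entry_of_above_raiseCol ht hNE hi ih.1 ih.2 hm
      refine ⟨hnext, fun k h1 h2 => ?_⟩
      by_cases h : k < J + m
      · exact ih.2 k h1 h
      · rw [show k = J + m by omega]
        exact ⟨hcol, i, hF.box_of_ne_zero (by omega), ih.1⟩
  exact hF.false_of_forall_entry_eq (c := J + 1) (by omega : t + 1 ≠ 0) fun m => by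
    rw [add_assoc, add_comm 1 m]
    exact (hrun (m + 1) (by omega)).1

theorem IsSSF.rop (hF : IsSSF n α F) (ht : 1 ≤ t) (hrt : t + 1 ≤ r)
    (hNE : {j | FreeT n α F t r j}.Nonempty) : IsSSF n α (Rop n α r t F) := by
  obtain ⟨-, hjv, hjt1, -⟩ := freeT_raiseCol hNE
  set J := raiseCol n α t r F
  have hx : ∀ {i k}, k ∈ raiseCols n α t r F → F i k = t → i = r :=
    fun hk => hF.row_eq_of_mem_exchangeCols (by omega) hjv hk
  have hy : ∀ {i k}, k ∈ raiseCols n α t r F → F i k = t + 1 → r < i :=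
    fun hk => hF.lt_row_of_mem_exchangeCols (by omega) hjt1 hk
  rw [rop_eq_colSwap hF ht hNE]
  refine isSSF_colSwap hF ht (fun i c hc h => by rw [hx hc h]; exact hrt)
    (hF.colSwap_row_antitone ?_ ?_ ?_) (hF.colSwap_triple ht ?_ ?_ ?_)
  · intro i c hc hc1 h h'
    have := hy hc h
    have := hx hc1 h'
    omega
  · intro i c hc hc1 h
    have hcJ : c = J := by
      by_contra h'
      exact hc1 (succ_mem_exchangeCols hc h')
    subst hcJ
    exact absurd ⟨i, hF.box_of_ne_zero (by omega), h⟩ hjt1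
  · intro i c hc hc1 h
    rw [hx hc1 h]
    exact hF.entry_ne_left_of_raiseCols ht hNE hc hc1
  · intro i i' c hii hc h h'
    have hir := hx hc h
    by_cases hcJ : c = J
    · subst hcJ
      exact absurd h' (hF.entry_ne_succ_above_raiseCol ht hNE (hir ▸ hii))
    · have := hy (succ_mem_exchangeCols hc hcJ) h'
      omega
  · intro i i' c hii _ hc1 h h'
    exact hF.entry_ne_of_succ_mem_raiseCols ht hNE hc1 ((hy hc1 h').trans hii) h
  · intro i i' c _ hc h h'
    have hcJ : c ≠ J := by
      rintro rfl
      exact hjt1 ⟨i, hF.box_of_ne_zero (by omega), h⟩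
    have hc1 := succ_mem_exchangeCols hc hcJ
    exact ⟨hc1, by rw [hx hc h']; exact entry_of_mem_exchangeCols hjv hc1⟩

theorem IsSSF.freeTp1_rop_raiseCol (hF : IsSSF n α F) (ht : 1 ≤ t)
    (hNE : {j | FreeT n α F t r j}.Nonempty) :
    FreeTp1 n α (Rop n α r t F) t r (raiseCol n α t r F) := by
  obtain ⟨hjb, hjv, hjt1, -⟩ := freeT_raiseCol hNE
  have hJ : raiseCol n α t r F ∈ raiseCols n α t r F := right_mem_exchangeCols
  rw [rop_eq_colSwap hF ht hNE]
  refine ⟨hjb, by rw [colSwap_of_mem hJ, hjv, Equiv.swap_apply_left],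
    by rwa [colContains_colSwap_of_mem hJ, Equiv.swap_apply_left], ?_⟩
  rintro ⟨i₀, j₀, -, hv₀, hcol₀, -, -, -, hi₀, hj₀J, hmid⟩
  have hj₀ : j₀ ∉ raiseCols n α t r F := by
    intro hj₀
    have hrj₀ := entry_of_mem_exchangeCols hjv hj₀
    refine hcol₀ ((colContains_colSwap_of_mem hj₀).2 ?_)
    rw [Equiv.swap_apply_right]
    exact ⟨r, hF.box_of_ne_zero (by omega), hrj₀⟩
  rw [colSwap_of_notMem hj₀] at hv₀
  have := hF.row_le_of_chain (by omega) hj₀J.le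
    (fun k h1 h2 => (colContains_colSwap_both.1 (hmid k h1 h2)).1) hv₀ hjv
  omega

theorem IsSSF.setOf_freeT_rop (hF : IsSSF n α F) (ht : 1 ≤ t)
    (hNE : {j | FreeT n α F t r j}.Nonempty) :
    {c | FreeT n α (Rop n α r t F) t r c} = {c | FreeT n α F t r c} \ {raiseCol n α t r F} := by
  obtain ⟨-, hjv, -, -⟩ := freeT_raiseCol hNE
  set J := raiseCol n α t r F
  rw [rop_eq_colSwap hF ht hNE]
  ext c
  simp only [Set.mem_ofPred_eq, Set.mem_sdiff, Set.mem_singleton_iff]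
  by_cases hc : c ∈ raiseCols n α t r F
  · refine iff_of_false (fun h => ?_) (fun ⟨h, hcJ⟩ => ?_)
    · have := h.2.1
      rw [colSwap_of_mem hc, entry_of_mem_exchangeCols hjv hc, Equiv.swap_apply_left] at this
      omega
    · obtain ⟨w, -, hbw, hw⟩ := exists_below_of_mem_exchangeCols hc hcJ
      exact h.2.2.1 ⟨w, hbw, hw⟩
  · have hcJ : c ≠ J := fun h => hc (h ▸ right_mem_exchangeCols)
    rcases lt_or_gt_of_ne hcJ with hlt | hgt
    · refine iff_of_false (fun h => ?_) (fun h => absurd (raiseCol_le h.1) (not_le.2 hlt))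
      obtain ⟨hb, hv, hcol, hpair⟩ := h
      rw [colSwap_of_notMem hc] at hv
      rw [colContains_colSwap_of_notMem hc] at hcol
      refine absurd (raiseCol_le ⟨hb, hv, hcol, fun ⟨i', j', hp⟩ => hpair ⟨i', j', ?_⟩⟩)
        (not_le.2 hlt)
      refine (pseudoFreePair_colSwap fun _ => ⟨hc, fun hj' => ?_⟩).2 hp
      have hrj' := entry_of_mem_exchangeCols hjv hj'
      exact hp.2.2.2.2.2.1 ⟨r, hF.box_of_ne_zero (by omega), hrj'⟩
    · rw [freeT_colSwap_iff fun k hk => notMem_exchangeCols_of_lt (hgt.trans_le hk)]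
      exact (and_iff_left hcJ).symm

theorem IsSSF.setOf_freeTp1_rop (hF : IsSSF n α F) (ht : 1 ≤ t)
    (hNE : {j | FreeT n α F t r j}.Nonempty) :
    {c | FreeTp1 n α (Rop n α r t F) t r c} =
      insert (raiseCol n α t r F) {c | FreeTp1 n α F t r c} := by
  obtain ⟨hjb, hjv, -, -⟩ := freeT_raiseCol hNE
  have hJfree := hF.freeTp1_rop_raiseCol ht hNE
  set J := raiseCol n α t r F
  rw [rop_eq_colSwap hF ht hNE] at hJfree ⊢
  ext c
  simp only [Set.mem_ofPred_eq, Set.mem_insert_iff]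
  by_cases hcJ : c = J
  · subst hcJ
    exact iff_of_true hJfree (Or.inl rfl)
  by_cases hc : c ∈ raiseCols n α t r F
  · refine iff_of_false (fun h => ?_) ?_
    · obtain ⟨w, -, hbw, hw⟩ := exists_below_of_mem_exchangeCols hc hcJ
      exact h.2.2.1 ((colContains_colSwap_of_mem hc).2
        (by rw [Equiv.swap_apply_left]; exact ⟨w, hbw, hw⟩))
    · rintro (h | h)
      · exact hcJ h
      · have := h.2.1
        rw [entry_of_mem_exchangeCols hjv hc] at this
        omega
  · rcases lt_or_gt_of_ne hcJ with hlt | hgt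
    · rw [freeTp1_colSwap_iff fun k hk hkI => hc (mem_exchangeCols_of_le hkI hk hlt.le)]
      exact ⟨Or.inr, fun h => h.resolve_left hcJ⟩
    · refine iff_of_false (fun h => ?_) ?_
      · have hv := h.2.1
        rw [colSwap_of_notMem hc] at hv
        have := hF.row_antitone h.1 hjb.2.2.1 hgt.le
        omega
      · rintro (h | h)
        · exact hcJ h
        · have := h.2.1
          have := hF.row_antitone h.1 hjb.2.2.1 hgt.le
          omega

/-! ### Counting free entries -/

theorem IsSSF.lop_step (hF : IsSSF n α F) (ht : 1 ≤ t) (hrt : t + 1 ≤ r)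
    (hpos : 0 < {c | FreeTp1 n α F t r c}.ncard) :
    IsSSF n α (Lop n α r t F) ∧
      {c | FreeTp1 n α (Lop n α r t F) t r c}.ncard + 1 = {c | FreeTp1 n α F t r c}.ncard ∧
      {c | FreeT n α (Lop n α r t F) t r c}.ncard = {c | FreeT n α F t r c}.ncard + 1 := by
  have hNE := Set.nonempty_of_ncard_ne_zero hpos.ne'
  have hJ := freeTp1_lowerCol hNE
  have hJ' : lowerCol n α t r F ∉ {c | FreeT n α F t r c} := fun h => by
    have := h.2.1
    have := hJ.2.1
    omega
  refine ⟨hF.lop ht hrt hNE, ?_, ?_⟩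
  · rw [hF.setOf_freeTp1_lop ht hNE,
      Set.ncard_sdiff_singleton_add_one (s := {c | FreeTp1 n α F t r c}) hJ finite_setOf_freeTp1]
  · rw [hF.setOf_freeT_lop ht hNE, Set.ncard_insert_of_notMem hJ' finite_setOf_freeT]

theorem IsSSF.rop_step (hF : IsSSF n α F) (ht : 1 ≤ t) (hrt : t + 1 ≤ r)
    (hpos : 0 < {c | FreeT n α F t r c}.ncard) :
    IsSSF n α (Rop n α r t F) ∧
      {c | FreeT n α (Rop n α r t F) t r c}.ncard + 1 = {c | FreeT n α F t r c}.ncard ∧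
      {c | FreeTp1 n α (Rop n α r t F) t r c}.ncard = {c | FreeTp1 n α F t r c}.ncard + 1 := by
  have hNE := Set.nonempty_of_ncard_ne_zero hpos.ne'
  have hJ := freeT_raiseCol hNE
  have hJ' : raiseCol n α t r F ∉ {c | FreeTp1 n α F t r c} := fun h => by
    have := h.2.1
    have := hJ.2.1
    omega
  refine ⟨hF.rop ht hrt hNE, ?_, ?_⟩
  · rw [hF.setOf_freeT_rop ht hNE,
      Set.ncard_sdiff_singleton_add_one (s := {c | FreeT n α F t r c}) hJ finite_setOf_freeT]
  · rw [hF.setOf_freeTp1_rop ht hNE, Set.ncard_insert_of_notMem hJ' finite_setOf_freeTp1]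

theorem counts_iterate_of_step {β : Type*} (f : β → β) (P : β → Prop) (a b : β → ℕ)
    (hf : ∀ x, P x → 0 < a x → P (f x) ∧ a (f x) + 1 = a x ∧ b (f x) = b x + 1)
    (m : ℕ) {x : β} (hx : P x) (hm : m ≤ a x) :
    a (f^[m] x) + m = a x ∧ b (f^[m] x) = b x + m := by
  induction m generalizing x with
  | zero => exact ⟨rfl, rfl⟩
  | succ m ih =>
    obtain ⟨hPx, ha, hb⟩ := hf x hx (by omega)
    obtain ⟨ha', hb'⟩ := ih hPx (by omega)
    rw [Function.iterate_succ_apply]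
    omega

/-- `Φ_{r,t}` exchanges the numbers of free entries `t` and `t+1` in row `r`. -/
theorem stmt9 (n : ℕ) (α : ℕ → ℕ) (t r : ℕ) (ht : 1 ≤ t) (hrt : t + 1 ≤ r)
    (F : ℕ → ℕ → ℕ) (hF : IsSSF n α F) :
    {j | FreeT n α (Phi n α r t F) t r j}.ncard
        = {j | FreeTp1 n α F t r j}.ncard ∧
    {j | FreeTp1 n α (Phi n α r t F) t r j}.ncard
        = {j | FreeT n α F t r j}.ncard := by
  have hL := counts_iterate_of_step (Lop n α r t) (IsSSF n α)
    (fun G => {j | FreeTp1 n α G t r j}.ncard) (fun G => {j | FreeT n α G t r j}.ncard)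
    fun _ hG => hG.lop_step ht hrt
  have hR := counts_iterate_of_step (Rop n α r t) (IsSSF n α)
    (fun G => {j | FreeT n α G t r j}.ncard) (fun G => {j | FreeTp1 n α G t r j}.ncard)
    fun _ hG => hG.rop_step ht hrt
  simp only [Phi]
  split_ifs with hlt hgt
  · obtain ⟨h₁, h₂⟩ := hL ({j | FreeTp1 n α F t r j}.ncard - {j | FreeT n α F t r j}.ncard) hF
      tsub_le_self
    omega
  · obtain ⟨h₁, h₂⟩ := hR ({j | FreeT n α F t r j}.ncard - {j | FreeTp1 n α F t r j}.ncard) hF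
      tsub_le_self
    omega
  · omega

end Skyline
end
end

section
/- Let α ∈ ℤ_{≥0}^n and let r be the first ascent of α. Then every F ∈ SSF(α) satisfies: for each 1 ≤ i ≤ r, every box in row i of F is filled with the entry i; and the first α_r boxes in row r+1 of F are all filled with the entry r+1. -/
open Classical MvPolynomial

noncomputable section

namespace Skyline

/-- If `r` is the first ascent of `α`, then in every `F ∈ SSF(α)` each box of
row `i` with `i ≤ r` is filled with `i`, and the first `α r` boxes of row `r+1`
are filled with `r+1`. -/
theorem stmt17 (n : ℕ) (α : ℕ → ℕ) (r : ℕ) (hr : FirstAscent n α r)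
    (F : ℕ → ℕ → ℕ) (hF : IsSSF n α F) :
    (∀ i j, 1 ≤ i → i ≤ r → Box n α i j → F i j = i) ∧
    (∀ j, 1 ≤ j → j ≤ α r → F (r+1) j = r + 1) := by
  obtain ⟨hr1, hrn, hdec, hasc⟩ := hr
  obtain ⟨h0, h1, h2, h3, h5, h6⟩ := hF
  have hmono : ∀ k, k ≤ r → ∀ i, 1 ≤ i → i ≤ k → α k ≤ α i := by
    intro k
    induction k with
    | zero => intro _ i h1i hik; omega
    | succ m ih =>
      intro hkr i h1i hik
      rcases Nat.eq_or_lt_of_le hik with heq | hlt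
      · rw [heq]
      · have h1 : α (m+1) ≤ α m := hdec m (by omega) (by omega)
        exact le_trans h1 (ih (by omega) i h1i (by omega))
  have main : ∀ i, 1 ≤ i → i ≤ r → ∀ j, Box n α i j → F i j = i := by
    intro i
    induction i using Nat.strong_induction_on with
    | _ i ih =>
      intro h1i hir j hbox
      obtain ⟨_, hin, h1j, hja⟩ := hbox
      have hle := h3 i j ⟨h1i, hin, h1j, hja⟩
      have hge := h1 i j ⟨h1i, hin, h1j, hja⟩
      by_contra hne
      set m := F i j with hm
      have hlt : m < i := lt_of_le_of_ne hle (fun h => hne h)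
      have hbox' : Box n α m j :=
        ⟨hge, by omega, h1j, le_trans hja (hmono i hir m hge (by omega))⟩
      have hval := ih m hlt hge (by omega) j hbox'
      exact h5 i m j ⟨h1i, hin, h1j, hja⟩ hbox' (by omega) (by omega)
  constructor
  · intro i j h1i hir hbox
    exact main i h1i hir j hbox
  · intro j h1j hja
    have hbr : Box n α (r+1) j := ⟨by omega, hrn, h1j, by omega⟩
    have hle := h3 (r+1) j hbr
    have hge := h1 (r+1) j hbr
    by_contra hne
    set m := F (r+1) j with hm
    have hlt : m < r + 1 := lt_of_le_of_ne hle (fun h => hne h)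
    have hbox' : Box n α m j :=
      ⟨hge, by omega, h1j, le_trans hja (hmono r (le_refl r) m hge (by omega))⟩
    have hval := main m hge (by omega) j hbox'
    exact h5 (r+1) m j hbr hbox' (by omega) (by omega)

end Skyline
end
end

section
/- Let α ∈ ℤ_{≥0}^n, let r be the first ascent of α, and let α' be obtained from α by interchanging α_r and α_{r+1}. For every F' ∈ SSF(α'), the filling F_0 obtained from F' by moving the last α_{r+1} − α_r boxes of row r, together with their entries, down to row r+1 is a semistandard skyline filling for α, i.e. F_0 ∈ SSF(α). -/
open Classical MvPolynomial

noncomputable section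

namespace Skyline

/-- For `F' ∈ SSF(α')`, the filling `F₀` obtained by moving the last
`α (r+1) - α r` boxes of row `r` of `F'` down to row `r+1` lies in `SSF(α)`. -/
theorem stmt18 (n : ℕ) (α : ℕ → ℕ) (r : ℕ) (hr : FirstAscent n α r)
    (F' : ℕ → ℕ → ℕ) (hF' : IsSSF n (swapComp α r) F') :
    IsSSF n α (moveDown α r F') := by
  obtain ⟨hr1, hr1n, hdec, hasc⟩ := hr
  obtain ⟨h0, h1, h2, h3, h4, h5⟩ := hF'
  have hrn : r ≤ n := by omega
  set β := swapComp α r with hβ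
  have s1 : β r = α (r+1) := by simp [hβ, swapComp]
  have s2 : β (r+1) = α r := by simp [hβ, swapComp]
  have s3 : ∀ i, i ≠ r → i ≠ r+1 → β i = α i := by
    intro i h h'; simp [hβ, swapComp, h, h']
  have chain : ∀ i, 1 ≤ i → i ≤ r → α r ≤ α i := by
    intro i hi hir
    have key : ∀ m, i ≤ m → m ≤ r → α m ≤ α i := by
      intro m hm
      induction m, hm using Nat.le_induction with
      | base => intro _; exact le_refl _
      | succ m hm ih =>
        intro hmr
        exact le_trans (hdec m (by omega) (by omega)) (ih (by omega))
    exact key r hir (le_refl r)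
  have boxB : ∀ i k, 1 ≤ i → i ≤ r+1 → 1 ≤ k → k ≤ α r → Box n β i k := by
    intro i k hi hir hk hkr
    refine ⟨hi, by omega, hk, ?_⟩
    by_cases h : i = r
    · rw [h, s1]; omega
    · by_cases h' : i = r+1
      · rw [h', s2]; exact hkr
      · rw [s3 i h h']; exact le_trans hkr (chain i hi (by omega))
  have lemA : ∀ i, i ≤ r+1 → 1 ≤ i → ∀ k, 1 ≤ k → k ≤ α r → F' i k = i := by
    intro i
    induction i using Nat.strong_induction_on with
    | _ i ih =>
      intro hir hi k hk hkr
      have hbox := boxB i k hi hir hk hkr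
      have hle := h3 i k hbox
      have hge := h1 i k hbox
      by_contra hne
      have hlt : F' i k < i := lt_of_le_of_ne hle hne
      have heq : F' (F' i k) k = F' i k :=
        ih (F' i k) hlt (by omega) hge k hk hkr
      exact h4 i (F' i k) k hbox (boxB _ k hge (by omega) hk hkr) (by omega) heq.symm
  have valG : ∀ i j, ¬(i = r ∧ α r < j) →
      moveDown α r F' i j = F' (if i = r+1 ∧ α r < j then r else i) j := by
    intro i j h
    simp only [moveDown]
    rw [if_neg h]
    split_ifs with h2' <;> rfl
  have boxToβ : ∀ i j, Box n α i j → ¬(i = r ∧ α r < j) →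
      Box n β (if i = r+1 ∧ α r < j then r else i) j := by
    rintro i j ⟨hi1, hi2, hj1, hj2⟩ hnot
    split_ifs with h
    · obtain ⟨he, hgt⟩ := h
      subst he
      exact ⟨hr1, hrn, hj1, by rw [s1]; exact hj2⟩
    · refine ⟨hi1, hi2, hj1, ?_⟩
      by_cases hir : i = r
      · have hle : j ≤ α r := by
          by_contra hc; exact hnot ⟨hir, by omega⟩
        rw [hir, s1]
        have := hj2
        rw [hir] at this
        omega
      · by_cases hir1 : i = r+1
        · have hle : j ≤ α r := by
            by_contra hc; exact h ⟨hir1, by omega⟩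
          rw [hir1, s2]; exact hle
        · rw [s3 i hir hir1]; exact hj2
  refine ⟨?_, ?_, ?_, ?_, ?_, ?_⟩
  · -- zero outside boxes
    intro i j hnb
    simp only [moveDown]
    split_ifs with hA hB
    · rfl
    · obtain ⟨hi, hj⟩ := hB
      subst hi
      apply h0
      rintro ⟨_, _, hj1, hj2⟩
      rw [s1] at hj2
      exact hnb ⟨by omega, by omega, by omega, hj2⟩
    · apply h0
      rintro ⟨hb1, hb2, hb3, hb4⟩
      apply hnb
      refine ⟨hb1, hb2, hb3, ?_⟩
      by_cases hi : i = r
      · have hx : ¬ α r < j := fun h => hA ⟨hi, h⟩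
        rw [hi] at hb4 ⊢
        omega
      · by_cases hi1 : i = r+1
        · have hx : ¬ α r < j := fun h => hB ⟨hi1, h⟩
          rw [hi1] at hb4 ⊢
          omega
        · rw [s3 i hi hi1] at hb4; exact hb4
  · -- positivity
    intro i j hb
    have hnot : ¬(i = r ∧ α r < j) := by
      rintro ⟨rfl, h'⟩; have := hb.2.2.2; omega
    rw [valG i j hnot]
    exact h1 _ j (boxToβ i j hb hnot)
  · -- rows weakly decrease
    rintro i j hj ⟨hi1, hi2, _, hj2⟩
    by_cases hi : i = r
    · subst i
      have hle : j + 1 ≤ α r := hj2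
      rw [valG r (j+1) (by rintro ⟨_, h⟩; omega), valG r j (by rintro ⟨_, h⟩; omega),
        if_neg (by rintro ⟨h, _⟩; omega), if_neg (by rintro ⟨h, _⟩; omega)]
      exact h2 r j hj ⟨hr1, hrn, by omega, by rw [s1]; omega⟩
    · by_cases hi' : i = r+1
      · subst hi'
        have hle : j + 1 ≤ α (r+1) := hj2
        by_cases hc1 : j + 1 ≤ α r
        · rw [valG (r+1) (j+1) (by rintro ⟨h, _⟩; omega), valG (r+1) j (by rintro ⟨h, _⟩; omega),
            if_neg (by rintro ⟨_, h⟩; omega), if_neg (by rintro ⟨_, h⟩; omega)]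
          exact h2 (r+1) j hj ⟨by omega, by omega, by omega, by rw [s2]; omega⟩
        · by_cases hc2 : α r < j
          · rw [valG (r+1) (j+1) (by rintro ⟨h, _⟩; omega), valG (r+1) j (by rintro ⟨h, _⟩; omega),
              if_pos ⟨rfl, by omega⟩, if_pos ⟨rfl, hc2⟩]
            exact h2 r j hj ⟨hr1, hrn, by omega, by rw [s1]; omega⟩
          · -- junction j = α r
            have hjeq : j = α r := by omega
            rw [valG (r+1) (j+1) (by rintro ⟨h, _⟩; omega), valG (r+1) j (by rintro ⟨h, _⟩; omega),
              if_pos ⟨rfl, by omega⟩, if_neg (by rintro ⟨_, h⟩; omega)]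
            have e1 : F' (r+1) j = r+1 := lemA (r+1) (le_refl _) (by omega) j hj (by omega)
            have e2 : F' r (j+1) ≤ r := h3 r (j+1) ⟨hr1, hrn, by omega, by rw [s1]; omega⟩
            omega
      · rw [valG i (j+1) (by rintro ⟨h, _⟩; exact hi h), valG i j (by rintro ⟨h, _⟩; exact hi h),
          if_neg (by rintro ⟨h, _⟩; exact hi' h), if_neg (by rintro ⟨h, _⟩; exact hi' h)]
        exact h2 i j hj ⟨hi1, hi2, by omega, by rw [s3 i hi hi']; exact hj2⟩
  · -- flag condition
    intro i j hb
    have hnot : ¬(i = r ∧ α r < j) := by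
      rintro ⟨rfl, h'⟩; have := hb.2.2.2; omega
    rw [valG i j hnot]
    have hx := h3 _ j (boxToβ i j hb hnot)
    split_ifs at hx ⊢ with h
    · obtain ⟨rfl, -⟩ := h
      omega
    · exact hx
  · -- column distinctness
    intro i i' j hb hb' hne
    have hnA : ¬(i = r ∧ α r < j) := by
      rintro ⟨rfl, h'⟩; have := hb.2.2.2; omega
    have hnA' : ¬(i' = r ∧ α r < j) := by
      rintro ⟨rfl, h'⟩; have := hb'.2.2.2; omega
    rw [valG i j hnA, valG i' j hnA']
    apply h4 _ _ j (boxToβ i j hb hnA) (boxToβ i' j hb' hnA')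
    split_ifs with hA hC hC
    · exact absurd (hA.1.trans hC.1.symm) hne
    · rintro rfl
      have h1' := hb'.2.2.2
      have h2' := hA.2
      omega
    · rintro rfl
      have h1' := hb.2.2.2
      have h2' := hC.2
      omega
    · exact hne
  · -- condition (iv)
    intro i i' j hb hb' hlt hval
    obtain ⟨hi1, hi2, hj1, hj2⟩ := hb
    obtain ⟨hi1', hi2', hj1', hj2'⟩ := hb'
    have hnA : ¬(i = r ∧ α r < j) := by rintro ⟨rfl, h'⟩; omega
    have hnA' : ¬(i' = r ∧ α r < j) := by rintro ⟨rfl, h'⟩; omega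
    rw [valG i j hnA, valG i' j hnA'] at hval
    by_cases hi'r : i' = r
    · subst i'
      have hjle : j ≤ α r := hj2'
      have hnj : ¬ α r < j := by omega
      rw [if_neg (by rintro ⟨_, h⟩; exact hnj h),
          if_neg (by rintro ⟨_, h⟩; exact hnj h)] at hval
      have hBi : Box n β i j := by
        have h' := boxToβ i j ⟨hi1, hi2, hj1, hj2⟩ hnA
        rwa [if_neg (by rintro ⟨_, h⟩; exact hnj h)] at h'
      by_cases hc1 : j + 1 ≤ α r
      · obtain ⟨⟨_, _, _, hc⟩, hlt2⟩ :=
          h5 i r j hBi ⟨hr1, hrn, hj1', by rw [s1]; omega⟩ hlt hval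
        refine ⟨⟨hr1, hrn, by omega, hc1⟩, ?_⟩
        rw [valG i j hnA, valG r (j+1) (by rintro ⟨_, h⟩; omega),
            if_neg (by rintro ⟨_, h⟩; exact hnj h),
            if_neg (by rintro ⟨h, _⟩; omega)]
        exact hlt2
      · exfalso
        have hjeq : j = α r := by omega
        have e1 : F' r j = r := lemA r (by omega) hr1 j hj1' (by omega)
        have e2 : F' (r+1) j = r+1 := lemA (r+1) (le_refl _) (by omega) j hj1' (by omega)
        have hir1 : i ≠ r + 1 := by
          rintro rfl
          omega
        obtain ⟨⟨_, _, _, hc⟩, -⟩ :=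
          h5 i (r+1) j hBi (boxB (r+1) j (by omega) (le_refl _) hj1' (by omega))
            (by omega) (by omega)
        rw [s2] at hc
        omega
    · by_cases hi'r1 : i' = r+1
      · subst hi'r1
        have hir : r + 1 < i := by omega
        have hBi : Box n β i j := by
          have h' := boxToβ i j ⟨hi1, hi2, hj1, hj2⟩ hnA
          rwa [if_neg (by rintro ⟨h, _⟩; omega)] at h'
        rw [if_neg (by rintro ⟨h, _⟩; omega)] at hval
        by_cases hjgt : α r < j
        · rw [if_pos ⟨rfl, hjgt⟩] at hval
          obtain ⟨⟨_, _, _, hc⟩, hlt2⟩ :=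
            h5 i r j hBi ⟨hr1, hrn, hj1', by rw [s1]; exact hj2'⟩ (by omega) hval
          rw [s1] at hc
          refine ⟨⟨by omega, by omega, by omega, hc⟩, ?_⟩
          rw [valG i j hnA, valG (r+1) (j+1) (by rintro ⟨h, _⟩; omega),
              if_neg (by rintro ⟨h, _⟩; omega), if_pos ⟨rfl, by omega⟩]
          exact hlt2
        · rw [if_neg (by rintro ⟨_, h⟩; exact hjgt h)] at hval
          by_cases hc1 : j + 1 ≤ α r
          · obtain ⟨⟨_, _, _, hc⟩, hlt2⟩ :=
              h5 i (r+1) j hBi ⟨by omega, by omega, hj1', by rw [s2]; omega⟩ hlt hval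
            refine ⟨⟨by omega, by omega, by omega, by omega⟩, ?_⟩
            rw [valG i j hnA, valG (r+1) (j+1) (by rintro ⟨h, _⟩; omega),
                if_neg (by rintro ⟨h, _⟩; omega), if_neg (by rintro ⟨_, h⟩; omega)]
            exact hlt2
          · exfalso
            have hjeq : j = α r := by omega
            obtain ⟨⟨_, _, _, hc⟩, -⟩ :=
              h5 i (r+1) j hBi ⟨by omega, by omega, hj1', by rw [s2]; omega⟩ hlt hval
            rw [s2] at hc
            omega
      · have hBi' : Box n β i' j := ⟨hi1', hi2', hj1', by rw [s3 i' hi'r hi'r1]; exact hj2'⟩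
        rw [if_neg (show ¬(i' = r + 1 ∧ α r < j) by rintro ⟨h, _⟩; exact hi'r1 h)] at hval
        by_cases hA : i = r + 1 ∧ α r < j
        · obtain ⟨heq, hgt⟩ := hA
          subst heq
          rw [if_pos (show r + 1 = r + 1 ∧ α r < j from ⟨rfl, hgt⟩)] at hval
          have hi'lt : i' < r := by omega
          obtain ⟨⟨_, _, _, hc⟩, hlt2⟩ :=
            h5 r i' j ⟨hr1, hrn, hj1, by rw [s1]; exact hj2⟩ hBi' hi'lt hval
          rw [s3 i' hi'r hi'r1] at hc
          refine ⟨⟨hi1', hi2', by omega, hc⟩, ?_⟩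
          rw [valG (r+1) j (by rintro ⟨h, _⟩; omega),
              valG i' (j+1) (by rintro ⟨h, _⟩; exact hi'r h),
              if_pos (show r + 1 = r + 1 ∧ α r < j from ⟨rfl, hgt⟩),
              if_neg (show ¬(i' = r + 1 ∧ α r < j + 1) by rintro ⟨h, _⟩; exact hi'r1 h)]
          exact hlt2
        · rw [if_neg hA] at hval
          have hBi : Box n β i j := by
            have h' := boxToβ i j ⟨hi1, hi2, hj1, hj2⟩ hnA
            rwa [if_neg hA] at h'
          obtain ⟨⟨_, _, _, hc⟩, hlt2⟩ := h5 i i' j hBi hBi' hlt hval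
          rw [s3 i' hi'r hi'r1] at hc
          refine ⟨⟨hi1', hi2', by omega, hc⟩, ?_⟩
          rw [valG i j hnA, valG i' (j+1) (by rintro ⟨h, _⟩; exact hi'r h),
              if_neg hA, if_neg (show ¬(i' = r + 1 ∧ α r < j + 1) by rintro ⟨h, _⟩; exact hi'r1 h)]
          exact hlt2

end Skyline
end
end

section
/- Let α ∈ ℤ_{≥0}^n be a composition whose parts are weakly increasing (α_1 ≤ α_2 ≤ … ≤ α_n). Then for every F ∈ SSF(α), the entries in each column of F are strictly increasing from top to bottom; consequently, the reflection of F about a horizontal line is a reverse semistandard Young tableau of shape α^rev = (α_n,…,α_1), i.e. its rows weakly decrease from left to right and its columns strictly decrease from top to bottom. -/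
open Classical MvPolynomial

noncomputable section

namespace Skyline

/-- If the parts of `α` are weakly increasing, then the columns of every
`F ∈ SSF(α)` strictly increase from top to bottom; consequently the reflection
`(i,j) ↦ F (n+1-i) j` of `F` about a horizontal line is a reverse semistandard
Young tableau of shape `α^rev`: its rows weakly decrease from left to right and
its columns strictly decrease from top to bottom. -/
theorem stmt19 (n : ℕ) (α : ℕ → ℕ) (hinc : ∀ i, 1 ≤ i → i < n → α i ≤ α (i+1))
    (F : ℕ → ℕ → ℕ) (hF : IsSSF n α F) :
    (∀ i i' j, Box n α i j → Box n α i' j → i < i' → F i j < F i' j) ∧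
    (∀ i j, 1 ≤ j → Box n (fun i => α (n + 1 - i)) i (j+1) →
        F (n + 1 - i) (j+1) ≤ F (n + 1 - i) j) ∧
    (∀ i i' j, Box n (fun i => α (n + 1 - i)) i j →
        Box n (fun i => α (n + 1 - i)) i' j → i < i' →
        F (n + 1 - i') j < F (n + 1 - i) j) := by
  obtain ⟨h0, h1, hrow, hflag, hdist, hiv⟩ := hF
  have hmono : ∀ l u, 1 ≤ u → u ≤ l → l ≤ n → α u ≤ α l := by
    intro l
    induction l with
    | zero => intro u hu hul _; omega
    | succ m ih =>
      intro u hu hul hn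
      rcases eq_or_lt_of_le hul with h | h
      · rw [h]
      · have h1 : α u ≤ α m := ih u hu (by omega) (by omega)
        have h2 : α m ≤ α (m+1) := hinc m (by omega) (by omega)
        omega
  have key : ∀ d u l j, u < l → Box n α u j → Box n α l j →
      α u + 1 - j ≤ d → ¬ F l j < F u j := by
    intro d
    induction d with
    | zero =>
      intro u l j _ hbu _ hd
      have := hbu.2.2.2
      omega
    | succ d ih =>
      intro u l j hul hbu hbl hd hlt
      obtain ⟨hb', hlt'⟩ := hiv l u j hbl hbu hul hlt
      have hbl' : Box n α l (j+1) :=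
        ⟨hbl.1, hbl.2.1, by omega,
          le_trans hb'.2.2.2 (hmono l u hbu.1 (le_of_lt hul) hbl.2.1)⟩
      have hle : F l (j+1) ≤ F l j := hrow l j hbl.2.2.1 hbl'
      exact ih u l (j+1) hul hb' hbl' (by omega) (by omega)
  have main : ∀ i i' j, Box n α i j → Box n α i' j → i < i' → F i j < F i' j := by
    intro u l j hbu hbl hul
    have hne : F u j ≠ F l j := hdist u l j hbu hbl (by omega)
    have := key (α u + 1 - j) u l j hul hbu hbl le_rfl
    omega
  refine ⟨main, ?_, ?_⟩
  · intro i j hj hb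
    obtain ⟨hi1, hi2, hj1, hj2⟩ := hb
    have hb' : Box n α (n+1-i) (j+1) := ⟨by omega, by omega, hj1, hj2⟩
    exact hrow (n+1-i) j hj hb'
  · intro i i' j hb hb' hii
    obtain ⟨hi1, hi2, hj1, hj2⟩ := hb
    obtain ⟨hi1', hi2', hj1', hj2'⟩ := hb'
    have hB : Box n α (n+1-i') j := ⟨by omega, by omega, hj1', hj2'⟩
    have hB' : Box n α (n+1-i) j := ⟨by omega, by omega, hj1, hj2⟩
    exact main (n+1-i') (n+1-i) j hB hB' (by omega)

end Skyline
end
end
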